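/- Let G be a graph whose vertex set is partitioned into sets L, M, R such that there are no edges between L and R. If the subgraph induced by L can be vertex-partitioned into a sets each inducing a graph with property P, the subgraph induced by R can be partitioned into b such sets, and M induces a graph with property P, where P is closed under disjoint unions and under taking induced subgraphs, then G can be vertex-partitioned into max(a,b) + 1 sets each inducing a graph with property P. -/
import Mathlib


theorem stmt2 {V : Type} (G : SimpleGraph V)
    (P : ∀ ⦃W : Type⦄, SimpleGraph W → Prop)
    -- P is closed under induced subgraphs
    (hPind : ∀ (W : Type) (H : SimpleGraph W) (S : Set W), P H → P (H.induce S))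
    -- P is closed under disjoint unions (of non-adjacent parts within a host graph)
    (hPdu : ∀ (W : Type) (H : SimpleGraph W) (S T : Set W), Disjoint S T →
      (∀ u ∈ S, ∀ v ∈ T, ¬ H.Adj u v) →
      P (H.induce S) → P (H.induce T) → P (H.induce (S ∪ T)))
    (L M R : Set V)
    (hcover : L ∪ M ∪ R = Set.univ)
    (hLM : Disjoint L M) (hLR : Disjoint L R) (hMR : Disjoint M R)
    (hnoedge : ∀ u ∈ L, ∀ v ∈ R, ¬ G.Adj u v)
    (a b : ℕ)
    (𝒜 : Fin a → Set V) (h𝒜cover : (⋃ i, 𝒜 i) = L)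
    (h𝒜disj : Pairwise (Function.onFun Disjoint 𝒜))
    (h𝒜P : ∀ i, P (G.induce (𝒜 i)))
    (ℬ : Fin b → Set V) (hℬcover : (⋃ j, ℬ j) = R)
    (hℬdisj : Pairwise (Function.onFun Disjoint ℬ))
    (hℬP : ∀ j, P (G.induce (ℬ j)))
    (hM : P (G.induce M)) :
    ∃ 𝒞 : Fin (max a b + 1) → Set V,
      (⋃ i, 𝒞 i) = Set.univ ∧ Pairwise (Function.onFun Disjoint 𝒞) ∧
      ∀ i, P (G.induce (𝒞 i)) := by
  classical
  set m := max a b with hm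
  have hAL : ∀ k : Fin a, 𝒜 k ⊆ L := fun k => h𝒜cover ▸ Set.subset_iUnion 𝒜 k
  have hBR : ∀ k : Fin b, ℬ k ⊆ R := fun k => hℬcover ▸ Set.subset_iUnion ℬ k
  set A : ℕ → Set V := fun i => if h : i < a then 𝒜 ⟨i, h⟩ else ∅ with hA
  set B : ℕ → Set V := fun i => if h : i < b then ℬ ⟨i, h⟩ else ∅ with hB
  have hA_L : ∀ i, A i ⊆ L := by
    intro i; by_cases h : i < a
    · simp only [hA, dif_pos h]; exact hAL ⟨i, h⟩
    · simp [hA, dif_neg h]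
  have hB_R : ∀ i, B i ⊆ R := by
    intro i; by_cases h : i < b
    · simp only [hB, dif_pos h]; exact hBR ⟨i, h⟩
    · simp [hB, dif_neg h]
  have hAdisj : ∀ i j : ℕ, i ≠ j → Disjoint (A i) (A j) := by
    intro i j hij
    by_cases hi : i < a
    · by_cases hj : j < a
      · simp only [hA, dif_pos hi, dif_pos hj]
        exact h𝒜disj (by simpa using hij)
      · simp [hA, dif_neg hj]
    · simp [hA, dif_neg hi]
  have hBdisj : ∀ i j : ℕ, i ≠ j → Disjoint (B i) (B j) := by
    intro i j hij
    by_cases hi : i < b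
    · by_cases hj : j < b
      · simp only [hB, dif_pos hi, dif_pos hj]
        exact hℬdisj (by simpa using hij)
      · simp [hB, dif_neg hj]
    · simp [hB, dif_neg hi]
  refine ⟨fun i => if (i : ℕ) < m then A i ∪ B i else M, ?_, ?_, ?_⟩
  · apply Set.eq_univ_of_univ_subset
    rw [← hcover]
    intro v hv
    rcases hv with (hv | hv) | hv
    · rw [← h𝒜cover] at hv
      rcases Set.mem_iUnion.1 hv with ⟨k, hk⟩
      have hka : (k : ℕ) < a := k.2
      have hkm : (k : ℕ) < m := lt_of_lt_of_le hka (le_max_left a b)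
      refine Set.mem_iUnion.2 ⟨⟨(k : ℕ), Nat.lt_succ_of_lt hkm⟩, ?_⟩
      simp only [if_pos hkm]
      left
      simp only [hA, dif_pos hka]
      exact hk
    · refine Set.mem_iUnion.2 ⟨⟨m, Nat.lt_succ_self m⟩, ?_⟩
      simp [hv]
    · rw [← hℬcover] at hv
      rcases Set.mem_iUnion.1 hv with ⟨k, hk⟩
      have hkb : (k : ℕ) < b := k.2
      have hkm : (k : ℕ) < m := lt_of_lt_of_le hkb (le_max_right a b)
      refine Set.mem_iUnion.2 ⟨⟨(k : ℕ), Nat.lt_succ_of_lt hkm⟩, ?_⟩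
      simp only [if_pos hkm]
      right
      simp only [hB, dif_pos hkb]
      exact hk
  · intro i j hij
    have hijv : (i : ℕ) ≠ (j : ℕ) := fun h => hij (Fin.ext h)
    show Disjoint _ _
    by_cases hi : (i : ℕ) < m
    · by_cases hj : (j : ℕ) < m
      · simp only [if_pos hi, if_pos hj]
        rw [Set.disjoint_union_left]
        constructor <;> rw [Set.disjoint_union_right]
        · exact ⟨hAdisj _ _ hijv, hLR.mono (hA_L i) (hB_R j)⟩
        · exact ⟨(hLR.mono (hA_L j) (hB_R i)).symm, hBdisj _ _ hijv⟩
      · simp only [if_pos hi, if_neg hj]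
        rw [Set.disjoint_union_left]
        exact ⟨hLM.mono_left (hA_L i), hMR.symm.mono_left (hB_R i)⟩
    · by_cases hj : (j : ℕ) < m
      · simp only [if_neg hi, if_pos hj]
        rw [Set.disjoint_union_right]
        exact ⟨(hLM.mono_left (hA_L j)).symm, hMR.mono_right (hB_R j)⟩
      · exact absurd (Fin.ext (by omega : (i:ℕ) = (j:ℕ)) : i = j) hij
  · intro i
    show P (G.induce (if (i : ℕ) < m then A ↑i ∪ B ↑i else M))
    by_cases hi : (i : ℕ) < m
    · rw [if_pos hi]
      by_cases ha : (i : ℕ) < a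
      · have h1 : A (i : ℕ) = 𝒜 ⟨(i : ℕ), ha⟩ := dif_pos ha
        by_cases hb : (i : ℕ) < b
        · have h2 : B (i : ℕ) = ℬ ⟨(i : ℕ), hb⟩ := dif_pos hb
          rw [h1, h2]
          refine hPdu V G _ _ (hLR.mono (hAL _) (hBR _)) ?_ (h𝒜P _) (hℬP _)
          intro u hu v hv
          exact hnoedge u (hAL _ hu) v (hBR _ hv)
        · have h2 : B (i : ℕ) = ∅ := dif_neg hb
          rw [h1, h2, Set.union_empty]
          exact h𝒜P _
      · by_cases hb : (i : ℕ) < b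
        · have h1 : A (i : ℕ) = ∅ := dif_neg ha
          have h2 : B (i : ℕ) = ℬ ⟨(i : ℕ), hb⟩ := dif_pos hb
          rw [h1, h2, Set.empty_union]
          exact hℬP _
        · exact absurd hi (by omega)
    · rw [if_neg hi]
      exact hM
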